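/- Let n : ℕ and let ω : Fin n → ℝ be linearly independent over ℚ, and let μ be the Haar probability measure on the n-torus (Fin n → AddCircle (1 : ℝ)) (the product of the normalized Haar measures on AddCircle 1). Then for every φ : Fin n → ℝ and every continuous f : (Fin n → AddCircle (1 : ℝ)) → ℝ, the time averages converge to the space average: Tendsto (fun T : ℝ => (1 / T) * ∫ t in Set.Ioc (0:ℝ) T, f (Φ t)) atTop (𝓝 (∫ x, f x ∂μ)), where Φ t = fun i => ((φ i + ω i * t : ℝ) : AddCircle 1). -/

import Mathlib

/-!
By Stone–Weierstrass the characters `x ↦ ∏ᵢ e^{2πi kᵢ xᵢ}` span a dense subspace of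
`C(𝕋ⁿ, ℂ)`. Along the flow the character of index `k ≠ 0` is `t ↦ c e^{2πi ⟨k, ω⟩ t}` with
`⟨k, ω⟩ ≠ 0` by rational independence, so its time averages are `O(1/T)` and tend to its integral
`0`; for `k = 0` both sides equal `1`. The time averages are linear of norm at most `1`, hence
equicontinuous, so the observables for which they converge to the space average form a closed
subspace; containing the dense span of the characters, it is everything. Real observables follow
by taking real parts.
-/

open Filter MeasureTheory Set Complex
open scoped Real Topology

theorem LinearMap.tendsto_of_dense_span {ι R M N : Type*} [Semiring R] [TopologicalSpace M]
    [AddCommMonoid M] [Module R M] [UniformSpace N] [AddCommMonoid N] [Module R N]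
    [ContinuousAdd N] [ContinuousConstSMul R N] {l : Filter ι} {F : ι → M →ₗ[R] N}
    {L : M →ₗ[R] N} (hF : Equicontinuous fun i => ⇑(F i)) (hL : Continuous L) {s : Set M}
    (hs : Dense (Submodule.span R s : Set M)) (h : ∀ x ∈ s, Tendsto (fun i => F i x) l (𝓝 (L x)))
    (x : M) : Tendsto (fun i => F i x) l (𝓝 (L x)) := by
  let S : Submodule R M :=
    { carrier := {x | Tendsto (fun i => F i x) l (𝓝 (L x))}
      add_mem' := fun hx hy => by simpa using hx.add hy
      zero_mem' := by simpa using tendsto_const_nhds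
      smul_mem' := fun c x hx => by simpa using hx.const_smul c }
  have hS : IsClosed (S : Set M) := hF.isClosed_setOfPred_tendsto hL
  exact hS.closure_subset_iff.mpr (Submodule.span_le.mpr h) (hs x)

section Averages

variable (𝕜 : Type*) {X E : Type*} [NontriviallyNormedField 𝕜] [TopologicalSpace X]
  [NormedAddCommGroup E] [NormedSpace ℝ E] [NormedSpace 𝕜 E] [SMulCommClass ℝ 𝕜 E]

noncomputable def timeAverage (γ : C(ℝ, X)) (T : ℝ) : C(X, E) →ₗ[𝕜] E where
  toFun g := (1 / T) • ∫ t in Ioc 0 T, g (γ t)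
  map_add' g h := by
    simp only [ContinuousMap.add_apply]
    rw [integral_add (by fun_prop : Continuous fun t => g (γ t)).integrableOn_Ioc
      (by fun_prop : Continuous fun t => h (γ t)).integrableOn_Ioc, smul_add]
  map_smul' c g := by
    simp only [ContinuousMap.smul_apply, RingHom.id_apply]
    rw [integral_smul, smul_comm]

theorem timeAverage_apply (γ : C(ℝ, X)) (T : ℝ) (g : C(X, E)) :
    timeAverage 𝕜 γ T g = (1 / T) • ∫ t in Ioc 0 T, g (γ t) :=
  rfl

variable [CompactSpace X]

theorem norm_timeAverage_le (γ : C(ℝ, X)) (T : ℝ) (g : C(X, E)) :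
    ‖timeAverage 𝕜 γ T g‖ ≤ ‖g‖ := by
  rcases le_or_gt T 0 with hT | hT
  -- for `T ≤ 0` the factor `1 / T` is junk, but `Ioc 0 T` is empty
  · simp [timeAverage_apply, Ioc_eq_empty_of_le hT]
  have hint : ‖∫ t in Ioc 0 T, g (γ t)‖ ≤ ‖g‖ * T := by
    simpa [hT.le] using norm_setIntegral_le_of_norm_le_const
      (measure_Ioc_lt_top (a := 0) (b := T) (μ := volume)) fun t _ => g.norm_coe_le_norm (γ t)
  rw [timeAverage_apply, norm_smul, Real.norm_of_nonneg (by positivity)]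
  calc 1 / T * ‖∫ t in Ioc 0 T, g (γ t)‖ ≤ 1 / T * (‖g‖ * T) := by gcongr
    _ = ‖g‖ := by field_simp

theorem equicontinuous_timeAverage (γ : C(ℝ, X)) :
    Equicontinuous fun T => ⇑(timeAverage 𝕜 γ T : C(X, E) →ₗ[𝕜] E) :=
  (LipschitzWith.uniformEquicontinuous _ 1 fun T => by
    simpa using AddMonoidHomClass.lipschitz_of_bound (timeAverage 𝕜 γ T) 1
      fun g => by simpa using norm_timeAverage_le 𝕜 γ T g).equicontinuous

variable [MeasurableSpace X] [OpensMeasurableSpace X]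

noncomputable def spaceAverage (μ : Measure X) [IsFiniteMeasure μ] : C(X, E) →ₗ[𝕜] E where
  toFun g := ∫ x, g x ∂μ
  map_add' g h := integral_add
    (g.continuous.integrable_of_hasCompactSupport (.of_compactSpace _))
    (h.continuous.integrable_of_hasCompactSupport (.of_compactSpace _))
  map_smul' c _ := integral_smul c _

theorem continuous_spaceAverage (μ : Measure X) [IsFiniteMeasure μ] :
    Continuous (spaceAverage 𝕜 μ : C(X, E) →ₗ[𝕜] E) :=
  AddMonoidHomClass.continuous_of_bound _ (μ.real univ) fun g => by
    rw [mul_comm]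
    exact norm_integral_le_of_norm_le_const (.of_forall g.norm_coe_le_norm)

end Averages

theorem tendsto_average_exp_mul_I {a b : ℝ} (hb : b ≠ 0) :
    Tendsto (fun T : ℝ => (1 / T) • ∫ t in Ioc 0 T, exp (↑(a + b * t) * I)) atTop (𝓝 0) := by
  have hbI : (b : ℂ) * I ≠ 0 := mul_ne_zero (ofReal_ne_zero.mpr hb) I_ne_zero
  have hnorm (s : ℝ) : ‖exp (b * I * s)‖ = 1 := by
    rw [show (b : ℂ) * I * s = ↑(b * s) * I by push_cast; ring, norm_exp_ofReal_mul_I]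
  have hint (T : ℝ) (hT : 0 ≤ T) : ‖∫ t in Ioc 0 T, exp (↑(a + b * t) * I)‖ ≤ 2 / |b| := by
    have : ∫ t in Ioc 0 T, exp (↑(a + b * t) * I)
        = exp (a * I) * ((exp (b * I * T) - exp (b * I * (0 : ℝ))) / (b * I)) := by
      rw [← integral_exp_mul_complex hbI, intervalIntegral.integral_of_le hT,
        ← integral_const_mul]
      congr 1 with t
      rw [← Complex.exp_add]
      push_cast
      ring_nf
    rw [this, norm_mul, norm_exp_ofReal_mul_I, one_mul, norm_div, norm_mul, norm_I, mul_one,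
      norm_real, Real.norm_eq_abs]
    gcongr
    exact (norm_sub_le _ _).trans_eq (by rw [hnorm, hnorm]; norm_num)
  refine squeeze_zero_norm' (a := fun T => 2 / |b| * (1 / T)) ?_ ?_
  · filter_upwards [eventually_gt_atTop 0] with T hT
    rw [norm_smul, Real.norm_of_nonneg (by positivity), mul_comm]
    gcongr
    exact hint T hT.le
  · simpa using tendsto_inv_atTop_zero.const_mul (2 / |b|)

instance : IsProbabilityMeasure (volume : Measure UnitAddCircle) := ⟨by simp⟩

theorem LinearIndependent.sum_intCast_mul_ne_zero {d : Type*} [Fintype d] {ω : d → ℝ}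
    (hω : LinearIndependent ℚ ω) {k : d → ℤ} (hk : k ≠ 0) : ∑ i, (k i : ℝ) * ω i ≠ 0 := by
  intro h
  refine hk (funext fun i => Fintype.linearIndependent_iff.mp (hω.restrict_scalars' ℤ) k ?_ i)
  simpa [zsmul_eq_mul] using h

namespace UnitAddTorus

variable {d : Type*} [Fintype d]

theorem integral_mFourier_of_ne_zero {k : d → ℤ} (hk : k ≠ 0) : ∫ x, mFourier k x = 0 := by
  obtain ⟨i, hi⟩ : ∃ i, k i ≠ 0 := Function.ne_iff.mp hk
  simp only [mFourier, ContinuousMap.coe_mk]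
  rw [volume_pi, integral_fintype_prod_eq_prod]
  -- translation by half a period of `fourier (k i)` negates it
  exact Finset.prod_eq_zero (Finset.mem_univ i)
    (integral_eq_zero_of_add_right_eq_neg (fourier_add_half_inv_index hi one_pos))

def linearFlow (ω φ : d → ℝ) : C(ℝ, UnitAddTorus d) where
  toFun t i := (φ i + ω i * t : ℝ)
  continuous_toFun := by fun_prop

theorem mFourier_linearFlow (ω φ : d → ℝ) (k : d → ℤ) (t : ℝ) :
    mFourier k (linearFlow ω φ t)
      = exp (↑(2 * π * ∑ i, k i * φ i + 2 * π * (∑ i, k i * ω i) * t) * I) := by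
  simp only [mFourier, linearFlow, ContinuousMap.coe_mk, fourier_coe_apply, ← exp_sum]
  congr 1
  push_cast
  simp only [Finset.mul_sum, Finset.sum_mul, ← Finset.sum_add_distrib]
  refine Finset.sum_congr rfl fun i _ => ?_
  ring

theorem tendsto_timeAverage_mFourier {ω : d → ℝ} (hω : LinearIndependent ℚ ω) (φ : d → ℝ)
    (k : d → ℤ) :
    Tendsto (fun T => timeAverage ℂ (linearFlow ω φ) T (mFourier k)) atTop
      (𝓝 (∫ x, mFourier k x)) := by
  rcases eq_or_ne k 0 with rfl | hk
  · simp only [mFourier_zero, ContinuousMap.one_apply, integral_const, probReal_univ,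
      one_smul]
    refine tendsto_const_nhds.congr' ?_
    filter_upwards [eventually_gt_atTop 0] with T hT
    simp [timeAverage_apply, hT.le, hT.ne']
  · rw [integral_mFourier_of_ne_zero hk]
    simp only [timeAverage_apply, mFourier_linearFlow]
    exact tendsto_average_exp_mul_I <|
      mul_ne_zero (by positivity) (hω.sum_intCast_mul_ne_zero hk)

theorem tendsto_timeAverage_linearFlow {ω : d → ℝ} (hω : LinearIndependent ℚ ω) (φ : d → ℝ)
    (g : C(UnitAddTorus d, ℂ)) :
    Tendsto (fun T => timeAverage ℂ (linearFlow ω φ) T g) atTop (𝓝 (∫ x, g x)) :=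
  LinearMap.tendsto_of_dense_span (equicontinuous_timeAverage ℂ _)
    (continuous_spaceAverage ℂ volume)
    (Submodule.dense_iff_topologicalClosure_eq_top.mpr span_mFourier_closure_eq_top)
    (forall_mem_range.mpr (tendsto_timeAverage_mFourier hω φ)) g

end UnitAddTorus

/-- Weyl equidistribution of the linear flow on the `n`-torus: with incommensurable
frequencies, time averages of any continuous observable along the phase flow converge to its
space average with respect to the Haar probability measure (the product of the normalized
Haar measures on `AddCircle 1`, i.e. `volume`). -/
theorem phase_flow_equidistributed (n : ℕ) (ω : Fin n → ℝ)
    (hω : LinearIndependent ℚ ω) (φ : Fin n → ℝ)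
    (f : (Fin n → AddCircle (1 : ℝ)) → ℝ) (hf : Continuous f) :
    Tendsto
      (fun T : ℝ => (1 / T) *
        ∫ t in Set.Ioc (0 : ℝ) T, f (fun i => ((φ i + ω i * t : ℝ) : AddCircle (1 : ℝ))))
      atTop
      (nhds (∫ x : Fin n → AddCircle (1 : ℝ), f x)) := by
  have h := UnitAddTorus.tendsto_timeAverage_linearFlow hω φ ⟨fun x => (f x : ℂ), by fun_prop⟩
  simp only [timeAverage_apply, ContinuousMap.coe_mk, integral_complex_ofReal, real_smul,
    ← ofReal_mul] at h
  exact tendsto_ofReal_iff.mp h
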